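/- arXiv:1806.06758 — 4 statements merged into one kernel-verified Lean document; each statement's English description precedes it below -/
import Mathlib

section
/- Let (X,d) be a metric space with at least two points carrying a doubling measure μ with all balls of positive finite measure. Then for every M > 0 there exists a doubling measure ν on (X,d) whose optimal doubling constant C_ν exceeds M. In other words, the supremum over doubling measures ν of C_ν is infinite. -/
open MeasureTheory Metric Filter

noncomputable def doublingConstant {X : Type*} [PseudoMetricSpace X] [MeasurableSpace X]
    (μ : Measure X) : ENNReal :=
  ⨆ (x : X) (r : ℝ) (_ : 0 < r), μ (ball x (2 * r)) / μ (ball x r)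

/-!
Add to `μ` a large multiple `K • μ|S` of its restriction to a small ball `S = B(x₀, d/4)`, where
`d = dist x₀ y > 0`. Since `μ ≤ ν ≤ (1 + K) μ`, the new measure `ν` is still doubling with
positive finite balls. The ball `B = B(y, 3d/4)` misses `S`, so `ν B = μ B`, while its double
contains `S`, so `ν (2B) ≥ K μ S`. Taking `K = (M + 1) μ B / μ S` forces `C_ν ≥ M + 1`.
-/

open scoped ENNReal

section Perturbation

variable {X : Type*} [MeasurableSpace X] (μ : Measure X) (K : ℝ≥0∞) (S : Set X)

theorem le_add_smul_restrict_apply (A : Set X) : μ A ≤ (μ + K • μ.restrict S) A :=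
  Measure.le_add_right le_rfl A

theorem add_smul_restrict_apply_le (A : Set X) :
    (μ + K • μ.restrict S) A ≤ (1 + K) * μ A := by
  rw [Measure.add_apply, Measure.smul_apply, smul_eq_mul, add_mul, one_mul]
  gcongr _ + K * ?_
  exact Measure.restrict_apply_le S A

theorem add_smul_restrict_apply_of_disjoint {A : Set X} (hA : MeasurableSet A)
    (hSA : Disjoint S A) : (μ + K • μ.restrict S) A = μ A := by
  rw [Measure.add_apply, Measure.smul_apply, Measure.restrict_apply hA,
    hSA.symm.inter_eq, measure_empty, smul_zero, add_zero]

theorem mul_le_add_smul_restrict_apply_of_subset {A : Set X} (hSA : S ⊆ A) :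
    K * μ S ≤ (μ + K • μ.restrict S) A := by
  rw [Measure.add_apply, Measure.smul_apply, Measure.restrict_apply_superset hSA, smul_eq_mul]
  exact le_add_self

end Perturbation

section Doubling

variable {X : Type*} [PseudoMetricSpace X] [MeasurableSpace X]

theorem div_le_doublingConstant (ν : Measure X) (x : X) {r : ℝ} (hr : 0 < r) :
    ν (ball x (2 * r)) / ν (ball x r) ≤ doublingConstant ν :=
  le_iSup₂_of_le x r (le_iSup_of_le hr le_rfl)

variable (μ : Measure X) (K : ℝ≥0∞) (S : Set X)

theorem add_smul_restrict_ball_pos_lt_top (hK : K < ⊤) {x : X} {r : ℝ}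
    (hμ : 0 < μ (ball x r) ∧ μ (ball x r) < ⊤) :
    0 < (μ + K • μ.restrict S) (ball x r) ∧ (μ + K • μ.restrict S) (ball x r) < ⊤ :=
  ⟨hμ.1.trans_le (le_add_smul_restrict_apply μ K S _),
    (add_smul_restrict_apply_le μ K S _).trans_lt
      (ENNReal.mul_lt_top (ENNReal.add_lt_top.2 ⟨ENNReal.one_lt_top, hK⟩) hμ.2)⟩

theorem add_smul_restrict_ball_two_mul_le {C : ℝ≥0∞} {x : X} {r : ℝ}
    (hμ : μ (ball x (2 * r)) ≤ C * μ (ball x r)) :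
    (μ + K • μ.restrict S) (ball x (2 * r)) ≤ (1 + K) * C * (μ + K • μ.restrict S) (ball x r) :=
  calc (μ + K • μ.restrict S) (ball x (2 * r)) ≤ (1 + K) * μ (ball x (2 * r)) :=
        add_smul_restrict_apply_le μ K S _
    _ ≤ (1 + K) * (C * μ (ball x r)) := by gcongr
    _ ≤ (1 + K) * C * (μ + K • μ.restrict S) (ball x r) := by
        rw [← mul_assoc]
        exact mul_le_mul_right (le_add_smul_restrict_apply μ K S _) _

theorem mul_div_le_doublingConstant_add_smul_restrict [OpensMeasurableSpace X] {y : X} {r : ℝ}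
    (hr : 0 < r) (hS_subset : S ⊆ ball y (2 * r)) (hS_disj : Disjoint S (ball y r)) :
    K * μ S / μ (ball y r) ≤ doublingConstant (μ + K • μ.restrict S) := by
  refine le_trans ?_ (div_le_doublingConstant _ y hr)
  rw [add_smul_restrict_apply_of_disjoint μ K S measurableSet_ball hS_disj]
  gcongr
  exact mul_le_add_smul_restrict_apply_of_subset μ K S hS_subset

end Doubling

theorem stmt_3 {X : Type*} [MetricSpace X] [MeasurableSpace X] [BorelSpace X] (μ : Measure X)
    (hX : ∃ x y : X, x ≠ y)
    (hpos : ∀ (x : X) (r : ℝ), 0 < r → 0 < μ (ball x r) ∧ μ (ball x r) < ⊤)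
    (hdbl : ∃ C : ENNReal, C < ⊤ ∧ ∀ (x : X) (r : ℝ), 0 < r →
      μ (ball x (2 * r)) ≤ C * μ (ball x r)) :
    ∀ M : ENNReal, M < ⊤ → ∃ ν : Measure X,
      (∀ (x : X) (r : ℝ), 0 < r → 0 < ν (ball x r) ∧ ν (ball x r) < ⊤) ∧
      (∃ C : ENNReal, C < ⊤ ∧ ∀ (x : X) (r : ℝ), 0 < r →
        ν (ball x (2 * r)) ≤ C * ν (ball x r)) ∧
      M < doublingConstant ν := by
  intro M hM
  obtain ⟨x₀, y, hne⟩ := hX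
  obtain ⟨C, hC, hμC⟩ := hdbl
  set d := dist x₀ y
  have hd : 0 < d := dist_pos.2 hne
  set S := ball x₀ (d / 4)
  obtain ⟨hS_pos, hS_fin⟩ := hpos x₀ (d / 4) (by positivity)
  obtain ⟨hB_pos, hB_fin⟩ := hpos y (3 * d / 4) (by positivity)
  set K := (M + 1) * μ (ball y (3 * d / 4)) / μ S
  have hK : K < ⊤ := ENNReal.div_lt_top
    (ENNReal.mul_ne_top (ENNReal.add_ne_top.2 ⟨hM.ne, ENNReal.one_ne_top⟩) hB_fin.ne) hS_pos.ne'
  have hS_subset : S ⊆ ball y (2 * (3 * d / 4)) := ball_subset_ball' (by linarith)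
  have hS_disj : Disjoint S (ball y (3 * d / 4)) := ball_disjoint_ball (by linarith)
  refine ⟨μ + K • μ.restrict S,
    fun x r hr ↦ add_smul_restrict_ball_pos_lt_top μ K S hK (hpos x r hr),
    ⟨(1 + K) * C, ENNReal.mul_lt_top (ENNReal.add_lt_top.2 ⟨ENNReal.one_lt_top, hK⟩) hC,
      fun x r hr ↦ add_smul_restrict_ball_two_mul_le μ K S (hμC x r hr)⟩, ?_⟩
  calc M < M + 1 := ENNReal.lt_add_right hM.ne one_ne_zero
    _ = K * μ S / μ (ball y (3 * d / 4)) := by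
        rw [ENNReal.div_mul_cancel hS_pos.ne' hS_fin.ne,
          ENNReal.mul_div_cancel_right hB_pos.ne' hB_fin.ne]
    _ ≤ doublingConstant (μ + K • μ.restrict S) :=
        mul_div_le_doublingConstant_add_smul_restrict μ K S (by positivity) hS_subset hS_disj
end

section
/- For each natural number n ≥ 1 and each θ ∈ (0,1], the equation x^{n+5} − x^{n+4} − θ·2^{n−1} = 0 has a unique solution x_n > 1, and x_n → 2 as n → ∞. -/
open Filter

lemma aux_mono (m : ℕ) {a b : ℝ} (ha : 1 ≤ a) (hab : a ≤ b) :
    a ^ m * (a - 1) ≤ b ^ m * (b - 1) := by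
  have h1 : a ^ m ≤ b ^ m := pow_le_pow_left₀ (by linarith) hab m
  have h2 : (0:ℝ) ≤ a ^ m := pow_nonneg (by linarith) m
  have h3 : (0:ℝ) ≤ b ^ m := pow_nonneg (by linarith) m
  nlinarith

lemma aux_smono (m : ℕ) {a b : ℝ} (ha : 1 ≤ a) (hab : a < b) :
    a ^ m * (a - 1) < b ^ m * (b - 1) := by
  have h1 : a ^ m ≤ b ^ m := pow_le_pow_left₀ (by linarith) hab.le m
  have h3 : (0:ℝ) < b ^ m := pow_pos (by linarith) m
  have h2 : (0:ℝ) ≤ a ^ m := pow_nonneg (by linarith) m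
  nlinarith

lemma aux_eq (n : ℕ) (x c : ℝ) :
    x ^ (n + 5) - x ^ (n + 4) - c = 0 ↔ x ^ (n + 4) * (x - 1) = c := by
  have : x ^ (n + 5) = x ^ (n + 4) * x := pow_succ x (n + 4)
  constructor <;> intro h <;> nlinarith

theorem stmt_7 (θ : ℝ) (hθ0 : 0 < θ) (hθ1 : θ ≤ 1) :
    (∀ n : ℕ, 1 ≤ n →
      ∃! x : ℝ, 1 < x ∧ x ^ (n + 5) - x ^ (n + 4) - θ * 2 ^ (n - 1) = 0) ∧
    ∀ x : ℕ → ℝ,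
      (∀ n : ℕ, 1 ≤ n → 1 < x n ∧ x n ^ (n + 5) - x n ^ (n + 4) - θ * 2 ^ (n - 1) = 0) →
      Tendsto x atTop (nhds 2) := by
  constructor
  · intro n hn
    set c : ℝ := θ * 2 ^ (n - 1) with hc
    have hcpos : 0 < c := by positivity
    set M : ℝ := 2 + c with hM
    have hM1 : (1:ℝ) ≤ M := by simp only [hM]; linarith
    have hcont : ContinuousOn (fun x : ℝ => x ^ (n + 4) * (x - 1)) (Set.Icc 1 M) :=
      (Continuous.mul (continuous_pow _) (by continuity)).continuousOn
    have h1 : (fun x : ℝ => x ^ (n + 4) * (x - 1)) 1 = 0 := by simp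
    have hMval : c ≤ (fun x : ℝ => x ^ (n + 4) * (x - 1)) M := by
      simp only
      have : (1:ℝ) ≤ M ^ (n + 4) := one_le_pow₀ hM1
      nlinarith
    have := intermediate_value_Icc hM1 hcont
    have hmem : c ∈ Set.Icc ((fun x : ℝ => x ^ (n + 4) * (x - 1)) 1)
        ((fun x : ℝ => x ^ (n + 4) * (x - 1)) M) := by
      rw [h1]; exact ⟨hcpos.le, hMval⟩
    obtain ⟨x, hx, hgx'⟩ := this hmem
    have hgx : x ^ (n + 4) * (x - 1) = c := hgx'
    have hx1 : 1 < x := by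
      rcases lt_or_eq_of_le hx.1 with h | h
      · exact h
      · exfalso; rw [← h] at hgx; simp at hgx; linarith
    refine ⟨x, ⟨hx1, (aux_eq n x c).mpr hgx⟩, ?_⟩
    rintro y ⟨hy1, hy2⟩
    have hgy : y ^ (n + 4) * (y - 1) = c := (aux_eq n y c).mp hy2
    by_contra hne
    rcases lt_or_gt_of_ne hne with h | h
    · have := aux_smono (n + 4) hy1.le h
      rw [hgy, hgx] at this; linarith
    · have := aux_smono (n + 4) hx1.le h
      rw [hgy, hgx] at this; linarith
  · intro x hx
    rw [Metric.tendsto_atTop]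
    intro ε hε
    set C : ℝ := max 1 (2 - ε) with hC
    have hC1 : (1:ℝ) ≤ C := le_max_left _ _
    have hC2 : C < 2 := by
      rw [hC, max_lt_iff]; constructor <;> linarith
    have hr0 : (0:ℝ) ≤ C / 2 := by linarith
    have hr1 : C / 2 < 1 := by linarith
    have htend : Tendsto (fun k : ℕ => (C / 2) ^ k) atTop (nhds 0) :=
      tendsto_pow_atTop_nhds_zero_of_lt_one hr0 hr1
    have hev : ∀ᶠ k in atTop, (C / 2) ^ k < θ / 32 :=
      htend.eventually (gt_mem_nhds (by positivity))
    obtain ⟨N, hN⟩ := eventually_atTop.mp hev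
    refine ⟨max N 1, fun n hn => ?_⟩
    have hn1 : 1 ≤ n := le_trans (le_max_right N 1) hn
    have hnN : N ≤ n + 4 := by
      have := le_trans (le_max_left N 1) hn; omega
    obtain ⟨hxn1, hxn2⟩ := hx n hn1
    have hgx : x n ^ (n + 4) * (x n - 1) = θ * 2 ^ (n - 1) := (aux_eq n _ _).mp hxn2
    have hpow : (2:ℝ) ^ (n + 4) = 2 ^ (n - 1) * 32 := by
      have h : n + 4 = (n - 1) + 5 := by omega
      rw [h, pow_add]; norm_num
    -- upper bound: x n < 2
    have hupper : x n < 2 := by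
      by_contra h
      push_neg at h
      have := aux_mono (n + 4) (by norm_num : (1:ℝ) ≤ 2) h
      rw [hgx] at this
      have h2 : (0:ℝ) < 2 ^ (n - 1) := by positivity
      nlinarith
    -- lower bound: C < x n
    have hlower : C < x n := by
      by_contra h
      push_neg at h
      have hm := aux_mono (n + 4) hxn1.le h
      rw [hgx] at hm
      have hCp : C ^ (n + 4) = (C / 2) ^ (n + 4) * 2 ^ (n + 4) := by
        rw [div_pow, div_mul_cancel₀]
        positivity
      have hk := hN (n + 4) hnN
      have h2 : (0:ℝ) < 2 ^ (n + 4) := by positivity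
      have hCb : C ^ (n + 4) < θ / 32 * 2 ^ (n + 4) := by
        rw [hCp]; exact mul_lt_mul_of_pos_right hk h2
      have hCm1 : C - 1 ≤ 1 := by linarith
      have hCpow : (0:ℝ) < C ^ (n + 4) := pow_pos (by linarith) _
      have : C ^ (n + 4) * (C - 1) ≤ C ^ (n + 4) := by nlinarith
      rw [hpow] at hCb
      have h3 : (0:ℝ) < 2 ^ (n - 1) := by positivity
      nlinarith
    have : 2 - ε ≤ C := le_max_right _ _
    rw [Real.dist_eq, abs_lt]
    constructor <;> linarith
end

section
/- For every n ∈ ℕ with n ≥ 1 and every 1 ≤ p ≤ ∞, the least doubling constant of ℝⁿ with the ℓ^p metric equals 2ⁿ; that is, the infimum over all doubling measures μ on (ℝⁿ, ‖·‖_p) of C_μ equals 2ⁿ. -/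
open MeasureTheory Metric Filter

/-!
Lebesgue (Haar) measure scales balls exactly by `2 ^ d`, so the infimum is at most `2 ^ d`.
Conversely, if `C` is the doubling constant of `μ`, a grid of `M ^ d` points at mutual distance
`≥ 2` spans a ball `B` of radius `O(M)`, and each `2 ^ k`-fold enlargement of a unit grid ball,
`2 ^ k ≈ M`, covers `B`; summing the disjoint unit balls gives `M ^ d ≤ C ^ (log₂ M + O(1))`,
which as `M = 2 ^ j → ∞` forces `2 ^ d ≤ C`.
-/

open Function Module
open scoped ENNReal NNReal

section DoublingMeasure

variable {X : Type*} [PseudoMetricSpace X] [MeasurableSpace X] {μ : Measure X}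

def HasPositiveFiniteBalls (μ : Measure X) : Prop :=
  ∀ (x : X) (r : ℝ), 0 < r → 0 < μ (ball x r) ∧ μ (ball x r) < ⊤

theorem measure_ball_two_mul_le_doublingConstant_mul {x : X} {r : ℝ} (hr : 0 < r)
    (h₀ : μ (ball x r) ≠ 0) (hₜ : μ (ball x r) ≠ ⊤) :
    μ (ball x (2 * r)) ≤ doublingConstant μ * μ (ball x r) :=
  (ENNReal.div_le_iff h₀ hₜ).1 <| le_iSup_of_le x <| le_iSup_of_le r <| le_iSup_of_le hr le_rfl

theorem measure_ball_two_pow_mul_le (hμ : HasPositiveFiniteBalls μ) (x : X) {r : ℝ}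
    (hr : 0 < r) (k : ℕ) :
    μ (ball x (2 ^ k * r)) ≤ doublingConstant μ ^ k * μ (ball x r) := by
  induction k with
  | zero => simp
  | succ k ih =>
    have hkr : 0 < 2 ^ k * r := by positivity
    calc μ (ball x (2 ^ (k + 1) * r)) = μ (ball x (2 * (2 ^ k * r))) := by ring_nf
      _ ≤ doublingConstant μ * μ (ball x (2 ^ k * r)) :=
        measure_ball_two_mul_le_doublingConstant_mul hkr (hμ x _ hkr).1.ne' (hμ x _ hkr).2.ne
      _ ≤ doublingConstant μ * (doublingConstant μ ^ k * μ (ball x r)) := by gcongr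
      _ = doublingConstant μ ^ (k + 1) * μ (ball x r) := by ring

theorem card_le_doublingConstant_pow [OpensMeasurableSpace X] (hμ : HasPositiveFiniteBalls μ)
    {ι : Type*} [Fintype ι] {y : ι → X} {x : X} {r s : ℝ} (hr : 0 < r) (hs : 0 < s) (k : ℕ)
    (hdisj : Pairwise (Disjoint on fun i => ball (y i) s))
    (hin : ∀ i, ball (y i) s ⊆ ball x r) (hout : ∀ i, ball x r ⊆ ball (y i) (2 ^ k * s)) :
    (Fintype.card ι : ℝ≥0∞) ≤ doublingConstant μ ^ k := by
  have hsum : ∑ i, μ (ball (y i) s) ≤ μ (ball x r) :=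
    calc ∑ i, μ (ball (y i) s) = μ (⋃ i, ball (y i) s) := by
          rw [measure_iUnion hdisj fun _ => measurableSet_ball, tsum_fintype]
      _ ≤ μ (ball x r) := measure_mono (Set.iUnion_subset hin)
  refine (ENNReal.mul_le_mul_iff_left (hμ x r hr).1.ne' (hμ x r hr).2.ne).1 ?_
  calc (Fintype.card ι : ℝ≥0∞) * μ (ball x r) = ∑ i : ι, μ (ball x r) := by simp
    _ ≤ ∑ i, doublingConstant μ ^ k * μ (ball (y i) s) := by
      gcongr with i
      exact (measure_mono (hout i)).trans (measure_ball_two_pow_mul_le hμ (y i) hs k)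
    _ ≤ doublingConstant μ ^ k * μ (ball x r) := by
      rw [← Finset.mul_sum]; gcongr

end DoublingMeasure

theorem ENNReal.le_of_forall_pow_le_pow_add {a c : ℝ≥0∞} (K : ℕ)
    (h : ∀ j, a ^ j ≤ c ^ (j + K)) : a ≤ c := by
  by_contra! hca
  have hc : c ≠ ⊤ := hca.ne_top
  have ha : a ≠ ⊤ := fun ha => by
    simpa [ha, hc, ENNReal.pow_ne_top] using h 1
  lift a to ℝ≥0 using ha
  lift c to ℝ≥0 using hc
  have hca : c < a := by exact_mod_cast hca
  have hlim : Tendsto (fun j : ℕ => c ^ K * (c / a) ^ j) atTop (nhds 0) := by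
    simpa using (NNReal.tendsto_pow_atTop_nhds_zero_of_lt_one
      ((div_lt_one (pos_of_gt hca)).2 hca)).const_mul (c ^ K)
  obtain ⟨j, hj⟩ := (hlim.eventually (gt_mem_nhds one_pos)).exists
  have hj' : a ^ j ≤ c ^ K * c ^ j := by
    have := h j
    rw [pow_add, mul_comm] at this
    exact_mod_cast this
  rw [div_pow, mul_div_assoc', div_lt_one (pow_pos (pos_of_gt hca) j)] at hj
  exact hj'.not_gt hj

section FiniteDimensional

variable {E : Type*} [NormedAddCommGroup E] [NormedSpace ℝ E] [FiniteDimensional ℝ E]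

theorem one_le_norm_natCast_sub_natCast_of_ne {d M : ℕ} {a b : Fin d → Fin M} (hab : a ≠ b) :
    1 ≤ ‖(fun i => (a i : ℝ)) - fun i => (b i : ℝ)‖ := by
  obtain ⟨i, hi⟩ := Function.ne_iff.1 hab
  have hi : (1 : ℤ) ≤ |((a i : ℕ) : ℤ) - (b i : ℕ)| :=
    Int.one_le_abs (sub_ne_zero.2 (by exact_mod_cast Fin.val_ne_of_ne hi))
  refine le_trans ?_ (norm_le_pi_norm _ i)
  rw [Pi.sub_apply, Real.norm_eq_abs]
  exact_mod_cast hi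

theorem exists_grid_disjoint_unit_balls : ∃ A : ℝ, ∀ M : ℕ, 0 < M →
    ∃ y : (Fin (finrank ℝ E) → Fin M) → E,
      Pairwise (Disjoint on fun a => ball (y a) 1) ∧ ∀ a, ball (y a) 1 ⊆ ball 0 (A * M) := by
  let e := (finBasis ℝ E).equivFunL
  obtain ⟨c₁, hc₁, he⟩ := (e : E →L[ℝ] Fin (finrank ℝ E) → ℝ).bound
  obtain ⟨c₂, hc₂, he'⟩ := (e.symm : (Fin (finrank ℝ E) → ℝ) →L[ℝ] E).bound
  refine ⟨2 * c₁ * c₂ + 1, fun M hM => ?_⟩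
  let v : (Fin (finrank ℝ E) → Fin M) → Fin (finrank ℝ E) → ℝ := fun a i => a i
  refine ⟨fun a => (2 * c₁) • e.symm (v a), fun a b hab => ball_disjoint_ball ?_,
    fun a z hz => ?_⟩
  · have hsep : 1 ≤ c₁ * ‖e.symm (v a - v b)‖ := by
      have := he (e.symm (v a - v b))
      rw [ContinuousLinearEquiv.coe_coe, ContinuousLinearEquiv.apply_symm_apply] at this
      exact (one_le_norm_natCast_sub_natCast_of_ne hab).trans this
    rw [dist_eq_norm, ← smul_sub, ← map_sub, norm_smul, Real.norm_of_nonneg (by positivity)]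
    nlinarith
  · have hya : ‖e.symm (v a)‖ ≤ c₂ * M := by
      refine (he' _).trans (mul_le_mul_of_nonneg_left ?_ hc₂.le)
      refine pi_norm_le_iff_of_nonneg (by positivity) |>.2 fun i => ?_
      rw [Real.norm_natCast]
      exact_mod_cast (a i).isLt.le
    have hM : (1 : ℝ) ≤ M := by exact_mod_cast hM
    rw [mem_ball, dist_eq_norm] at hz
    rw [mem_ball_zero_iff]
    calc ‖z‖ ≤ ‖z - (2 * c₁) • e.symm (v a)‖ + ‖(2 * c₁) • e.symm (v a)‖ :=
          norm_le_norm_sub_add _ _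
      _ < 1 + 2 * c₁ * (c₂ * M) := by
        rw [norm_smul, Real.norm_of_nonneg (by positivity)]
        exact add_lt_add_of_lt_of_le hz (by gcongr)
      _ ≤ (2 * c₁ * c₂ + 1) * M := by nlinarith

variable [MeasurableSpace E]

theorem hasPositiveFiniteBalls_addHaar (μ : Measure E) [μ.IsAddHaarMeasure] :
    HasPositiveFiniteBalls μ :=
  fun x _ hr => ⟨measure_ball_pos μ x hr, measure_ball_lt_top⟩

variable [BorelSpace E]

theorem two_pow_finrank_le_doublingConstant {μ : Measure E}
    (hμ : HasPositiveFiniteBalls μ) :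
    2 ^ finrank ℝ E ≤ doublingConstant μ := by
  obtain ⟨A, hA⟩ := exists_grid_disjoint_unit_balls (E := E)
  obtain ⟨K, hK⟩ := pow_unbounded_of_one_lt (2 * A) one_lt_two
  refine ENNReal.le_of_forall_pow_le_pow_add K fun j => ?_
  obtain ⟨y, hdisj, hin⟩ := hA (2 ^ j) (by positivity)
  have hy : ∀ a, ‖y a‖ < A * (2 ^ j : ℕ) :=
    fun a => mem_ball_zero_iff.1 (hin a (mem_ball_self one_pos))
  have hr : 0 < A * (2 ^ j : ℕ) :=
    (norm_nonneg _).trans_lt (hy fun _ => ⟨0, Nat.two_pow_pos j⟩)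
  have hout : ∀ a, ball 0 (A * (2 ^ j : ℕ)) ⊆ ball (y a) (2 ^ (j + K) * 1) := by
    intro a
    have hya := hy a
    refine ball_subset_ball' ?_
    rw [dist_zero_left, pow_add]
    push_cast at hya ⊢
    nlinarith [pow_pos (two_pos (α := ℝ)) j]
  have := card_le_doublingConstant_pow hμ hr one_pos (j + K) hdisj hin hout
  simpa [← pow_mul, mul_comm] using this

theorem addHaar_ball_two_mul (μ : Measure E) [μ.IsAddHaarMeasure] (x : E) (r : ℝ) :
    μ (ball x (2 * r)) = 2 ^ finrank ℝ E * μ (ball x r) := by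
  rw [Measure.addHaar_ball_mul_of_pos μ x two_pos, Measure.addHaar_ball_center μ x r,
    ENNReal.ofReal_pow zero_le_two, ENNReal.ofReal_ofNat]

theorem doublingConstant_addHaar (μ : Measure E) [μ.IsAddHaarMeasure] :
    doublingConstant μ = 2 ^ finrank ℝ E := by
  have hratio : ∀ (x : E) (r : ℝ), 0 < r →
      μ (ball x (2 * r)) / μ (ball x r) = 2 ^ finrank ℝ E := fun x r hr => by
    rw [addHaar_ball_two_mul, ENNReal.mul_div_cancel_right (measure_ball_pos μ x hr).ne'
      measure_ball_lt_top.ne]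
  refine le_antisymm (iSup₂_le fun x r => iSup_le fun hr => (hratio x r hr).le) ?_
  exact le_iSup_of_le 0 <| le_iSup_of_le 1 <| le_iSup_of_le one_pos (hratio 0 1 one_pos).ge

end FiniteDimensional

theorem stmt_15_general (n : ℕ) (p : ENNReal) [Fact (1 ≤ p)]
    [MeasurableSpace (PiLp p (fun _ : Fin n => ℝ))]
    [BorelSpace (PiLp p (fun _ : Fin n => ℝ))] :
    (⨅ μ : {μ : Measure (PiLp p (fun _ : Fin n => ℝ)) //
        (∀ (x : PiLp p (fun _ : Fin n => ℝ)) (r : ℝ), 0 < r →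
          0 < μ (ball x r) ∧ μ (ball x r) < ⊤) ∧
        ∃ C : ENNReal, C < ⊤ ∧ ∀ (x : PiLp p (fun _ : Fin n => ℝ)) (r : ℝ), 0 < r →
          μ (ball x (2 * r)) ≤ C * μ (ball x r)},
      doublingConstant μ.1) = 2 ^ n := by
  let ν : Measure (PiLp p (fun _ : Fin n => ℝ)) := Measure.addHaar
  have hdim : finrank ℝ (PiLp p (fun _ : Fin n => ℝ)) = n := by
    rw [(WithLp.linearEquiv p ℝ _).finrank_eq, finrank_fin_fun]
  have hν : doublingConstant ν = 2 ^ n := by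
    rw [doublingConstant_addHaar, hdim]
  refine le_antisymm (iInf_le_of_le ⟨ν, hasPositiveFiniteBalls_addHaar ν, 2 ^ n,
    ENNReal.pow_lt_top ENNReal.ofNat_lt_top, fun x r _ => ?_⟩ hν.le) ?_
  · exact (addHaar_ball_two_mul ν x r).le.trans_eq (by rw [hdim])
  · exact le_iInf fun μ => (two_pow_finrank_le_doublingConstant μ.2.1).trans_eq' (by rw [hdim])

theorem stmt_15 (n : ℕ) (hn : 1 ≤ n) (p : ENNReal) [Fact (1 ≤ p)]
    [MeasurableSpace (PiLp p (fun _ : Fin n => ℝ))]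
    [BorelSpace (PiLp p (fun _ : Fin n => ℝ))] :
    (⨅ μ : {μ : Measure (PiLp p (fun _ : Fin n => ℝ)) //
        (∀ (x : PiLp p (fun _ : Fin n => ℝ)) (r : ℝ), 0 < r →
          0 < μ (ball x r) ∧ μ (ball x r) < ⊤) ∧
        ∃ C : ENNReal, C < ⊤ ∧ ∀ (x : PiLp p (fun _ : Fin n => ℝ)) (r : ℝ), 0 < r →
          μ (ball x (2 * r)) ≤ C * μ (ball x r)},
      doublingConstant μ.1) = 2 ^ n :=
  stmt_15_general n p
end

section
/- Let S_n be the star graph on n ≥ 2 vertices (one center x₁ adjacent to the n−1 leaves, leaves at mutual distance 2) with the shortest-path metric. Then the least doubling constant over all measures giving positive mass to each vertex equals 1 + √(n−1). -/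
open MeasureTheory Metric Filter
open scoped Classical

private lemma star_core {ι : Type*} (t : Finset ι) (f : ι → ℝ) (hf : ∀ i ∈ t, 0 < f i)
    (b : ℝ) (hb : 0 < b) (m : ℝ) (hm : (t.card : ℝ) = m) (hm1 : 1 ≤ m) :
    (1 + Real.sqrt m) * b ≤ b + ∑ i ∈ t, f i ∨
      ∃ i ∈ t, (1 + Real.sqrt m) * f i ≤ f i + b := by
  by_contra h
  push_neg at h
  obtain ⟨h1, h2⟩ := h
  have hm0 : 0 < m := lt_of_lt_of_le one_pos hm1
  have hs : 0 < Real.sqrt m := Real.sqrt_pos.2 hm0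
  have hsq : Real.sqrt m * Real.sqrt m = m := Real.mul_self_sqrt hm0.le
  have hne : t.Nonempty := by
    rw [← Finset.card_pos]
    have : (0:ℝ) < t.card := hm ▸ hm0
    exact_mod_cast this
  have key : ∀ i ∈ t, b / Real.sqrt m < f i := by
    intro i hi
    have h3 := h2 i hi
    have h4 : b < Real.sqrt m * f i := by nlinarith [hf i hi]
    rw [div_lt_iff₀ hs]
    nlinarith
  have hsum : ∑ _i ∈ t, (b / Real.sqrt m) < ∑ i ∈ t, f i :=
    Finset.sum_lt_sum_of_nonempty hne key
  rw [Finset.sum_const, nsmul_eq_mul, hm] at hsum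
  have hmm : m * (b / Real.sqrt m) = Real.sqrt m * b := by
    field_simp
    nlinarith
  rw [hmm] at hsum
  nlinarith

private lemma meas_univ_eq {α} [MeasurableSpace α] [MeasurableSingletonClass α] [Fintype α]
    (μ : Measure α) : μ Set.univ = ∑ a : α, μ {a} := by
  rw [show (Set.univ : Set α) = ⋃ a ∈ (Finset.univ : Finset α), {a} by
    ext y; simp]
  exact measure_biUnion_finset
    (fun i _ j _ hij => by simpa [Set.disjoint_singleton] using hij)
    (fun b _ => measurableSet_singleton b)

theorem stmt_17 {X : Type*} [MetricSpace X] [MeasurableSpace X] [BorelSpace X]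
    (n : ℕ) (hn : 2 ≤ n) (e : X ≃ Fin n) (c : X)
    (hdist : ∀ a b : X, a ≠ b → dist a b = if a = c ∨ b = c then 1 else 2) :
    (∀ μ : Measure X, (∀ a : X, 0 < μ {a}) → μ Set.univ < ⊤ →
      ENNReal.ofReal (1 + Real.sqrt (n - 1)) ≤ doublingConstant μ) ∧
    ∃ μ : Measure X, (∀ a : X, 0 < μ {a}) ∧ μ Set.univ < ⊤ ∧
      doublingConstant μ = ENNReal.ofReal (1 + Real.sqrt (n - 1)) := by
  haveI : Fintype X := Fintype.ofEquiv (Fin n) e.symm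
  haveI : MeasurableSingletonClass X := ⟨fun _ => isClosed_singleton.measurableSet⟩
  set m : ℝ := (n : ℝ) - 1 with hm_def
  have hn' : (2:ℝ) ≤ (n:ℝ) := by exact_mod_cast hn
  have hm1 : 1 ≤ m := by simp only [hm_def]; linarith
  have hm0 : (0:ℝ) < m := by linarith
  have hs0 : 0 < Real.sqrt m := Real.sqrt_pos.2 hm0
  have hsq : Real.sqrt m * Real.sqrt m = m := Real.mul_self_sqrt hm0.le
  have hK0 : (0:ℝ) < 1 + Real.sqrt m := by linarith
  have hcard : Fintype.card X = n := by rw [Fintype.card_congr e, Fintype.card_fin]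
  -- distance facts
  have hd1 : ∀ a : X, dist a c ≤ 1 := by
    intro a
    rcases eq_or_ne a c with rfl | h
    · simp
    · rw [hdist a c h]; simp
  have hdge : ∀ a b : X, a ≠ b → 1 ≤ dist a b := by
    intro a b h
    rw [hdist a b h]
    split <;> norm_num
  -- ball facts
  have hball_small : ∀ (x : X) (s : ℝ), 0 < s → s ≤ 1 → ball x s = {x} := by
    intro x s hs hs1
    ext y
    simp only [mem_ball, Set.mem_singleton_iff]
    constructor
    · intro hy
      by_contra hne
      have := hdge y x hne
      linarith
    · rintro rfl; simpa using hs
  have hball_c : ∀ s : ℝ, 1 < s → ball c s = Set.univ := by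
    intro s hs
    ext y
    simp only [mem_ball, Set.mem_univ, iff_true]
    exact lt_of_le_of_lt (hd1 y) hs
  have hball_sub : ∀ (x : X) (s : ℝ), x ≠ c → s ≤ 2 → ball x s ⊆ {x, c} := by
    intro x s hx hs2 y hy
    simp only [Set.mem_insert_iff, Set.mem_singleton_iff]
    by_contra hcon
    push_neg at hcon
    obtain ⟨hyx, hyc⟩ := hcon
    rw [mem_ball, hdist y x hyx, if_neg (by simp [hyc, hx])] at hy
    linarith
  have hball_sup : ∀ (x : X) (s : ℝ), 1 < s → ({x, c} : Set X) ⊆ ball x s := by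
    intro x s hs y hy
    rcases hy with rfl | hy
    · exact mem_ball_self (by linarith)
    · rw [Set.mem_singleton_iff] at hy
      subst hy
      rw [mem_ball]
      exact lt_of_le_of_lt (by rw [dist_comm]; exact hd1 x) hs
  -- the ratio at (x, r = 1) bounds the doubling constant
  have hterm : ∀ (μ : Measure X) (x : X),
      μ (ball x (2 * 1)) / μ (ball x 1) ≤ doublingConstant μ := by
    intro μ x
    exact le_iSup_of_le x (le_iSup_of_le 1 (le_iSup_of_le one_pos le_rfl))
  -- lower bound
  have lower : ∀ μ : Measure X, (∀ a : X, 0 < μ {a}) → μ Set.univ < ⊤ →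
      ENNReal.ofReal (1 + Real.sqrt m) ≤ doublingConstant μ := by
    intro μ hpos hfin
    have hfa : ∀ a : X, μ {a} ≠ ⊤ :=
      fun a => ((measure_mono (Set.subset_univ _)).trans_lt hfin).ne
    set f : X → ℝ := fun a => (μ {a}).toReal with hf_def
    have hf : ∀ a, 0 < f a := fun a => ENNReal.toReal_pos (hpos a).ne' (hfa a)
    have hμs : ∀ a : X, μ {a} = ENNReal.ofReal (f a) :=
      fun a => (ENNReal.ofReal_toReal (hfa a)).symm
    have hcard' : ((Finset.univ.erase c).card : ℝ) = m := by
      rw [Finset.card_erase_of_mem (Finset.mem_univ c), Finset.card_univ, hcard,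
        Nat.cast_sub (by omega)]
      simp [hm_def]
    rcases star_core (Finset.univ.erase c) f (fun i _ => hf i) (f c) (hf c) m hcard' hm1
      with h | ⟨ℓ, hℓt, hℓ⟩
    · -- center case
      have huniv : μ Set.univ = ENNReal.ofReal (f c + ∑ i ∈ Finset.univ.erase c, f i) := by
        rw [meas_univ_eq μ, ← Finset.add_sum_erase _ _ (Finset.mem_univ c),
          ENNReal.ofReal_add (hf c).le (Finset.sum_nonneg fun i _ => (hf i).le),
          ENNReal.ofReal_sum_of_nonneg (fun i _ => (hf i).le)]
        congr 1
        · exact hμs c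
        · exact Finset.sum_congr rfl fun i _ => hμs i
      refine le_trans ?_ (hterm μ c)
      rw [hball_c (2*1) (by norm_num), hball_small c 1 one_pos le_rfl,
        ENNReal.le_div_iff_mul_le (Or.inl ((hpos c).ne')) (Or.inl (hfa c)),
        hμs c, huniv, ← ENNReal.ofReal_mul hK0.le]
      exact ENNReal.ofReal_le_ofReal h
    · -- leaf case
      have hℓc : ℓ ≠ c := Finset.ne_of_mem_erase hℓt
      have hpair : μ {ℓ, c} = ENNReal.ofReal (f ℓ + f c) := by
        rw [show ({ℓ, c} : Set X) = {ℓ} ∪ {c} from rfl,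
          measure_union (by simp [hℓc]) (measurableSet_singleton c), hμs ℓ, hμs c,
          ENNReal.ofReal_add (hf ℓ).le (hf c).le]
      refine le_trans ?_ (hterm μ ℓ)
      rw [hball_small ℓ 1 one_pos le_rfl,
        ENNReal.le_div_iff_mul_le (Or.inl ((hpos ℓ).ne')) (Or.inl (hfa ℓ)),
        hμs ℓ, ← ENNReal.ofReal_mul hK0.le]
      refine le_trans (le_trans (ENNReal.ofReal_le_ofReal hℓ) hpair.ge) ?_
      exact measure_mono (le_trans (hball_sup ℓ (2*1) (by norm_num)) le_rfl)
  constructor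
  · exact lower
  -- existence
  set w : X → ENNReal := fun a => if a = c then ENNReal.ofReal (Real.sqrt m) else 1 with hw_def
  set μ : Measure X := ∑ a : X, w a • Measure.dirac a with hμ_def
  have hμsing : ∀ x : X, μ {x} = w x := by
    intro x
    rw [hμ_def, Measure.finset_sum_apply]
    simp only [Measure.smul_apply, smul_eq_mul, Measure.dirac_apply,
      Set.indicator_apply, Set.mem_singleton_iff, Pi.one_apply, mul_ite, mul_one, mul_zero]
    rw [Finset.sum_ite_eq' Finset.univ x w]
    simp
  have hwc : w c = ENNReal.ofReal (Real.sqrt m) := by simp [hw_def]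
  have hwx : ∀ x : X, x ≠ c → w x = 1 := by intro x hx; simp [hw_def, hx]
  have hpos' : ∀ a : X, 0 < μ {a} := by
    intro a
    rw [hμsing a, hw_def]
    by_cases ha : a = c <;> simp [ha, ENNReal.ofReal_pos, hs0]
  have hμuniv : μ Set.univ = ENNReal.ofReal (Real.sqrt m + m) := by
    rw [meas_univ_eq μ, ← Finset.add_sum_erase _ _ (Finset.mem_univ c), hμsing c, hwc]
    have h1 : ∑ a ∈ Finset.univ.erase c, μ {a} = (n - 1 : ℕ) := by
      rw [Finset.sum_congr rfl (fun a ha => by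
        rw [hμsing a, hwx a (Finset.ne_of_mem_erase ha)]),
        Finset.sum_const, Finset.card_erase_of_mem (Finset.mem_univ c), Finset.card_univ, hcard]
      simp
    rw [h1, ENNReal.ofReal_add hs0.le hm0.le]
    congr 1
    rw [← ENNReal.ofReal_natCast]
    congr 1
    rw [Nat.cast_sub (by omega)]
    simp [hm_def]
  have hfin' : μ Set.univ < ⊤ := by rw [hμuniv]; exact ENNReal.ofReal_lt_top
  have hμpair : ∀ x : X, x ≠ c → μ {x, c} = ENNReal.ofReal (1 + Real.sqrt m) := by
    intro x hx
    rw [show ({x, c} : Set X) = {x} ∪ {c} from rfl,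
      measure_union (by simp [hx]) (measurableSet_singleton c), hμsing x, hμsing c,
      hwx x hx, hwc, ENNReal.ofReal_add one_pos.le hs0.le, ENNReal.ofReal_one]
  have hμfin : ∀ s : Set X, μ s ≠ ⊤ :=
    fun s => ((measure_mono (Set.subset_univ _)).trans_lt hfin').ne
  have upper : doublingConstant μ ≤ ENNReal.ofReal (1 + Real.sqrt m) := by
    refine iSup_le fun x => iSup_le fun r => iSup_le fun hr => ?_
    have hden_ne : μ (ball x r) ≠ 0 := by
      have hsub : ({x} : Set X) ⊆ ball x r := by
        simp only [Set.singleton_subset_iff]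
        exact mem_ball_self hr
      exact ((hpos' x).trans_le (measure_mono hsub)).ne'
    rw [ENNReal.div_le_iff_le_mul (Or.inl hden_ne) (Or.inl (hμfin _))]
    have hK1 : (1 : ENNReal) ≤ ENNReal.ofReal (1 + Real.sqrt m) :=
      ENNReal.one_le_ofReal.2 (by linarith)
    rcases le_or_gt (2*r) 1 with h2r | h2r
    · rw [hball_small x (2*r) (by linarith) h2r, hball_small x r hr (by linarith)]
      calc μ {x} = 1 * μ {x} := (one_mul _).symm
        _ ≤ _ := mul_le_mul_left hK1 _
    · rcases le_or_gt r 1 with hr1 | hr1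
      · rw [hball_small x r hr hr1, hμsing x]
        by_cases hx : x = c
        · subst hx
          refine (measure_mono (Set.subset_univ _)).trans ?_
          rw [hμuniv, hwc, ← ENNReal.ofReal_mul hK0.le]
          apply ENNReal.ofReal_le_ofReal
          nlinarith
        · refine (measure_mono (hball_sub x (2*r) hx (by linarith))).trans ?_
          rw [hμpair x hx, hwx x hx, mul_one]
      · refine (measure_mono (Set.subset_univ _)).trans ?_
        by_cases hx : x = c
        · subst hx
          have hcb : ({x} : Set X) ⊆ ball x r := by
            simp only [Set.singleton_subset_iff]
            exact mem_ball_self (by linarith)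
          refine le_trans ?_ (mul_le_mul_right (measure_mono hcb) _)
          rw [hμuniv, hμsing x, hwc, ← ENNReal.ofReal_mul hK0.le]
          apply ENNReal.ofReal_le_ofReal
          nlinarith
        · have hcb : ({x, c} : Set X) ⊆ ball x r := hball_sup x r hr1
          refine le_trans ?_ (mul_le_mul_right (measure_mono hcb) _)
          rw [hμuniv, hμpair x hx, ← ENNReal.ofReal_mul hK0.le]
          apply ENNReal.ofReal_le_ofReal
          nlinarith
  exact ⟨μ, hpos', hfin', le_antisymm upper (lower μ hpos' hfin')⟩
end
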